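/- Let P(x_1,…,x_d) be a polynomial such that for every subset X ⊆ {1,…,d} the monomial ∏_{j∈X} x_j has a strictly positive coefficient, while every other monomial has zero coefficient, and let K(t) := log P(e^{t_1},…,e^{t_d}). Then: (i) P has full rank; (ii) P is aperiodic; (iii) for every λ ∈ (0,1)^d, the function t ↦ K(t) − λ^T t tends to +∞ as t tends to any boundary point of [−∞,+∞]^d; and (iv) consequently there exists a unique τ ∈ ℝ^d at which the gradient of t ↦ K(t) − λ^T t vanishes. -/

import Mathlib

open scoped BigOperators Topology

namespace PaperStmt

variable {d : ℕ}

/-- `P` has full rank: the differences of support vectors span `ℝ^d`. -/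
def FullRank (P : MvPolynomial (Fin d) ℝ) : Prop :=
  Submodule.span ℝ
    {v : Fin d → ℝ | ∃ n m : Fin d →₀ ℕ,
      P.coeff n ≠ 0 ∧ P.coeff m ≠ 0 ∧
      v = fun j => (n j : ℝ) - (m j : ℝ)} = ⊤

/-- `P` is `q`-periodic. -/
def QPeriodic (P : MvPolynomial (Fin d) ℝ) (q : ℕ) : Prop :=
  ∃ p : Fin d → ℕ, (¬ ∀ j, q ∣ p j) ∧ ∃ r : ℤ,
    ∀ n : Fin d →₀ ℕ, P.coeff n ≠ 0 →
      ∃ k : ℕ, (∑ j, (p j : ℤ) * (n j : ℤ)) = r + q * k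

/-- `P` is aperiodic if it is not `q`-periodic for any `q ≥ 2`. -/
def Aperiodic (P : MvPolynomial (Fin d) ℝ) : Prop :=
  ∀ q : ℕ, 2 ≤ q → ¬ QPeriodic P q

end PaperStmt

open PaperStmt

/-!
Write `P(e^t) = ∑ₙ cₙ e^{⟨n,t⟩}` with all `cₙ ≥ 0`. The exponents `0` and `e_j` lie in the
support, which gives (i) and (ii) at once. Comparing `P(e^t)` with its single term for the
monomial `∏_{t_j ≥ 0} x_j` gives `K(t) - λᵀt ≥ m + ∑ⱼ min(λⱼ, 1 - λⱼ) |tⱼ|`, so `K - λᵀt` tends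
to `+∞` at infinity, which gives (iii) and a global minimum, hence a critical point. Along a line
`τ + x v`, the derivative of `K` in direction `v` is the mean of `⟨n, v⟩` for the weights
`cₙ e^{⟨n, τ + x v⟩}`, and its derivative in `x` is the variance, which is positive by full rank.
So `K - λᵀt` is strictly convex and its critical point is unique.
-/

open Filter Finset

theorem Finset.sq_sum_mul_lt_sum_mul_sum {ι : Type*} {s : Finset ι} {w b : ι → ℝ}
    (hw : ∀ i ∈ s, 0 < w i) {i j : ι} (hi : i ∈ s) (hj : j ∈ s) (hb : b i ≠ b j) :
    (∑ k ∈ s, w k * b k) ^ 2 < (∑ k ∈ s, w k) * ∑ k ∈ s, w k * b k ^ 2 := by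
  have hW : 0 < ∑ k ∈ s, w k := sum_pos hw ⟨i, hi⟩
  set μ := (∑ k ∈ s, w k * b k) / ∑ k ∈ s, w k
  have hvar : 0 < ∑ k ∈ s, w k * (b k - μ) ^ 2 := by
    obtain ⟨k, hk, hkμ⟩ : ∃ k ∈ s, b k ≠ μ := by
      by_contra! h
      exact hb ((h i hi).trans (h j hj).symm)
    exact sum_pos' (fun k hk => mul_nonneg (hw k hk).le (sq_nonneg _))
      ⟨k, hk, mul_pos (hw k hk) (sq_pos_of_ne_zero (sub_ne_zero.2 hkμ))⟩
  have hexpand : ∑ k ∈ s, w k * (b k - μ) ^ 2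
      = ∑ k ∈ s, w k * b k ^ 2 - 2 * μ * ∑ k ∈ s, w k * b k + μ ^ 2 * ∑ k ∈ s, w k := by
    simp only [mul_sum, ← sum_sub_distrib, ← sum_add_distrib]
    exact sum_congr rfl fun k _ => by ring
  have hμW : μ * ∑ k ∈ s, w k = ∑ k ∈ s, w k * b k := div_mul_cancel₀ _ hW.ne'
  nlinarith

section ExpMoment

variable {ι : Type*} {s : Finset ι} {w b : ι → ℝ}

/-- The `k`-th derivative of `x ↦ ∑ i ∈ s, w i * exp (x * b i)`. -/
noncomputable def expMoment (s : Finset ι) (w b : ι → ℝ) (k : ℕ) (x : ℝ) : ℝ :=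
  ∑ i ∈ s, w i * b i ^ k * Real.exp (x * b i)

theorem hasDerivAt_expMoment (k : ℕ) (x : ℝ) :
    HasDerivAt (expMoment s w b k) (expMoment s w b (k + 1) x) x := by
  unfold expMoment
  refine HasDerivAt.fun_sum fun i _ => ?_
  exact (((hasDerivAt_mul_const (b i)).exp).const_mul (w i * b i ^ k)).congr_deriv (by ring)

theorem expMoment_zero_pos (hw : ∀ i ∈ s, 0 < w i) (hs : s.Nonempty) (x : ℝ) :
    0 < expMoment s w b 0 x :=
  sum_pos (fun i hi => by
    simpa only [pow_zero, mul_one] using mul_pos (hw i hi) (Real.exp_pos (x * b i))) hs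

theorem strictMono_expMoment_div (hw : ∀ i ∈ s, 0 < w i) {i j : ι} (hi : i ∈ s) (hj : j ∈ s)
    (hb : b i ≠ b j) :
    StrictMono fun x => expMoment s w b 1 x / expMoment s w b 0 x := by
  refine strictMono_of_deriv_pos fun x => ?_
  have h0 := expMoment_zero_pos (b := b) hw ⟨i, hi⟩ x
  rw [((hasDerivAt_expMoment 1 x).fun_div (hasDerivAt_expMoment 0 x) h0.ne').deriv]
  refine div_pos ?_ (pow_pos h0 2)
  have hvar := sq_sum_mul_lt_sum_mul_sum
    (fun k hk => mul_pos (hw k hk) (Real.exp_pos (x * b k))) hi hj hb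
  simp only [expMoment, zero_add, Nat.reduceAdd, pow_zero, pow_one, mul_one,
    mul_right_comm _ (Real.exp _)] at hvar ⊢
  nlinarith

end ExpMoment

theorem comap_coe_nhds_le_cocompact {ι : Type*} {ℓ : ι → EReal} (hℓ : ∃ j, ℓ j = ⊤ ∨ ℓ j = ⊥) :
    comap (fun t : ι → ℝ => fun j => ((t j : ℝ) : EReal)) (𝓝 ℓ) ≤ cocompact (ι → ℝ) := by
  obtain ⟨j, hj⟩ := hℓ
  have hcoord : Tendsto (fun t : ι → ℝ => ((t j : ℝ) : EReal))
      (comap (fun t : ι → ℝ => fun j => ((t j : ℝ) : EReal)) (𝓝 ℓ)) (𝓝 (ℓ j)) :=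
    ((continuous_apply j).tendsto ℓ).comp tendsto_comap
  have hj' : Tendsto (fun t : ι → ℝ => t j)
      (comap (fun t : ι → ℝ => fun j => ((t j : ℝ) : EReal)) (𝓝 ℓ)) (cocompact ℝ) := by
    rcases hj with h | h <;> rw [h] at hcoord
    · exact (EReal.tendsto_coe_nhds_top_iff.1 hcoord).mono_right atTop_le_cocompact
    · exact (EReal.tendsto_coe_nhds_bot_iff.1 hcoord).mono_right atBot_le_cocompact
  rw [← coprodᵢ_cocompact]
  exact hj'.le_comap.trans (le_iSup (fun i => comap (Function.eval i) (cocompact ℝ)) j)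

theorem ContinuousLinearMap.eq_zero_of_apply_single {ι : Type*} [Fintype ι] [DecidableEq ι]
    {L : (ι → ℝ) →L[ℝ] ℝ} (h : ∀ j, L (Pi.single j 1) = 0) : L = 0 :=
  ContinuousLinearMap.coe_injective ((Pi.basisFun ℝ ι).ext fun j => by simpa using h j)

namespace PaperStmt

variable {d : ℕ} {P : MvPolynomial (Fin d) ℝ}

theorem fullRank_of_coeff_ne_zero (h0 : P.coeff 0 ≠ 0)
    (h1 : ∀ j, P.coeff (Finsupp.single j 1) ≠ 0) : FullRank P := by
  rw [FullRank, eq_top_iff, ← (Pi.basisFun ℝ (Fin d)).span_eq]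
  refine Submodule.span_mono ?_
  rintro _ ⟨j, rfl⟩
  refine ⟨Finsupp.single j 1, 0, h1 j, h0, ?_⟩
  funext i
  simp [Pi.single_apply, Finsupp.single_apply, eq_comm]

theorem aperiodic_of_coeff_ne_zero (h0 : P.coeff 0 ≠ 0)
    (h1 : ∀ j, P.coeff (Finsupp.single j 1) ≠ 0) : Aperiodic P := by
  rintro q - ⟨p, hp, r, h⟩
  refine hp fun j => ?_
  obtain ⟨k₀, hk₀⟩ := h 0 h0
  obtain ⟨k, hk⟩ := h _ (h1 j)
  simp [Finsupp.single_apply] at hk₀ hk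
  exact Int.natCast_dvd_natCast.1 ⟨k - k₀, by linarith⟩

theorem FullRank.exists_sum_mul_ne (hrank : FullRank P) {v : Fin d → ℝ} (hv : v ≠ 0) :
    ∃ n ∈ P.support, ∃ m ∈ P.support, ∑ j, (n j : ℝ) * v j ≠ ∑ j, (m j : ℝ) * v j := by
  by_contra! h
  let φ : (Fin d → ℝ) →ₗ[ℝ] ℝ := Fintype.linearCombination ℝ v
  have hker : LinearMap.ker φ = ⊤ := by
    rw [eq_top_iff, ← hrank, Submodule.span_le]
    rintro _ ⟨n, m, hn, hm, rfl⟩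
    simp [φ, Fintype.linearCombination_apply, sub_mul, sum_sub_distrib,
      h n (MvPolynomial.mem_support_iff.2 hn) m (MvPolynomial.mem_support_iff.2 hm)]
  refine hv (funext fun j => ?_)
  simpa [φ, Fintype.linearCombination_apply, Pi.single_apply] using
    LinearMap.congr_fun (LinearMap.ker_eq_top.1 hker) (Pi.single j 1)

noncomputable def cgf (P : MvPolynomial (Fin d) ℝ) (t : Fin d → ℝ) : ℝ :=
  Real.log (MvPolynomial.eval (fun j => Real.exp (t j)) P)

/-- `K(t) - λᵀ t`. -/
noncomputable def tiltedCgf (P : MvPolynomial (Fin d) ℝ) (lam t : Fin d → ℝ) : ℝ :=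
  cgf P t - ∑ j, lam j * t j

theorem eval_exp_eq_sum (P : MvPolynomial (Fin d) ℝ) (t : Fin d → ℝ) :
    MvPolynomial.eval (fun j => Real.exp (t j)) P
      = ∑ n ∈ P.support, P.coeff n * Real.exp (∑ j, (n j : ℝ) * t j) := by
  simp only [MvPolynomial.eval_eq', Real.exp_sum, Real.exp_nat_mul]

theorem differentiable_eval_exp (P : MvPolynomial (Fin d) ℝ) :
    Differentiable ℝ fun t : Fin d → ℝ => MvPolynomial.eval (fun j => Real.exp (t j)) P := by
  simp only [eval_exp_eq_sum]
  fun_prop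

theorem coeff_mul_exp_le_eval_exp (hP : ∀ n, 0 ≤ P.coeff n) {n : Fin d →₀ ℕ}
    (hn : n ∈ P.support) (t : Fin d → ℝ) :
    P.coeff n * Real.exp (∑ j, (n j : ℝ) * t j)
      ≤ MvPolynomial.eval (fun j => Real.exp (t j)) P := by
  rw [eval_exp_eq_sum]
  exact single_le_sum (f := fun m => P.coeff m * Real.exp (∑ j, (m j : ℝ) * t j))
    (fun m _ => mul_nonneg (hP m) (Real.exp_pos _).le) hn

theorem eval_exp_pos (hP : ∀ n, 0 ≤ P.coeff n) (hP0 : P ≠ 0) (t : Fin d → ℝ) :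
    0 < MvPolynomial.eval (fun j => Real.exp (t j)) P := by
  obtain ⟨n, hn⟩ := MvPolynomial.ne_zero_iff.1 hP0
  exact (mul_pos ((hP n).lt_of_ne hn.symm) (Real.exp_pos _)).trans_le
    (coeff_mul_exp_le_eval_exp hP (MvPolynomial.mem_support_iff.2 hn) t)

theorem log_coeff_add_le_cgf (hP : ∀ n, 0 ≤ P.coeff n) {n : Fin d →₀ ℕ} (hn : 0 < P.coeff n)
    (t : Fin d → ℝ) : Real.log (P.coeff n) + ∑ j, (n j : ℝ) * t j ≤ cgf P t := by
  have h := Real.log_le_log (mul_pos hn (Real.exp_pos _))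
    (coeff_mul_exp_le_eval_exp hP (MvPolynomial.mem_support_iff.2 hn.ne') t)
  rwa [Real.log_mul hn.ne' (Real.exp_pos _).ne', Real.log_exp] at h

theorem differentiable_tiltedCgf (hP : ∀ n, 0 ≤ P.coeff n) (hP0 : P ≠ 0) (lam : Fin d → ℝ) :
    Differentiable ℝ (tiltedCgf P lam) := fun t =>
  (((differentiable_eval_exp P) t).log (eval_exp_pos hP hP0 t).ne').sub (by fun_prop)

/-- The `k`-th derivative of `x ↦ P(e^{τ + x v})`. -/
noncomputable def lineMoment (P : MvPolynomial (Fin d) ℝ) (τ v : Fin d → ℝ) (k : ℕ) (x : ℝ) : ℝ :=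
  expMoment P.support (fun n => P.coeff n * Real.exp (∑ j, (n j : ℝ) * τ j))
    (fun n => ∑ j, (n j : ℝ) * v j) k x

theorem eval_exp_line (P : MvPolynomial (Fin d) ℝ) (τ v : Fin d → ℝ) (x : ℝ) :
    MvPolynomial.eval (fun j => Real.exp ((τ + x • v) j)) P = lineMoment P τ v 0 x := by
  rw [eval_exp_eq_sum]
  refine sum_congr rfl fun n _ => ?_
  simp only [Pi.add_apply, Pi.smul_apply, smul_eq_mul, mul_add, sum_add_distrib, Real.exp_add,
    pow_zero, mul_one, mul_left_comm _ x, ← mul_sum, mul_assoc]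

theorem hasDerivAt_tiltedCgf_line (hP : ∀ n, 0 ≤ P.coeff n) (hP0 : P ≠ 0) (lam τ v : Fin d → ℝ)
    (x : ℝ) :
    HasDerivAt (fun x => tiltedCgf P lam (τ + x • v))
      (lineMoment P τ v 1 x / lineMoment P τ v 0 x - ∑ j, lam j * v j) x := by
  have hfun : (fun x => tiltedCgf P lam (τ + x • v))
      = fun x => Real.log (lineMoment P τ v 0 x) - (∑ j, lam j * τ j + x * ∑ j, lam j * v j) := by
    funext x
    rw [tiltedCgf, cgf, eval_exp_line]
    simp only [Pi.add_apply, Pi.smul_apply, smul_eq_mul, mul_add, sum_add_distrib,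
      mul_left_comm _ x, ← mul_sum]
  have hpos : 0 < lineMoment P τ v 0 x := eval_exp_line P τ v x ▸ eval_exp_pos hP hP0 _
  rw [hfun]
  exact (((hasDerivAt_expMoment 0 x).log hpos.ne').sub
    (((hasDerivAt_id x).mul_const _).const_add _)).congr_deriv (by simp [lineMoment])

theorem fderiv_tiltedCgf_line (hP : ∀ n, 0 ≤ P.coeff n) (hP0 : P ≠ 0) (lam τ v : Fin d → ℝ)
    (x : ℝ) :
    fderiv ℝ (tiltedCgf P lam) (τ + x • v) v
      = lineMoment P τ v 1 x / lineMoment P τ v 0 x - ∑ j, lam j * v j := by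
  have hline : HasDerivAt (fun x : ℝ => τ + x • v) v x := by
    simpa using ((hasDerivAt_id x).smul_const v).const_add τ
  exact ((differentiable_tiltedCgf hP hP0 lam _).hasFDerivAt.comp_hasDerivAt x hline).unique
    (hasDerivAt_tiltedCgf_line hP hP0 lam τ v x)

theorem strictMono_fderiv_tiltedCgf_line (hP : ∀ n, 0 ≤ P.coeff n) (hP0 : P ≠ 0)
    (hrank : FullRank P) (lam τ : Fin d → ℝ) {v : Fin d → ℝ} (hv : v ≠ 0) :
    StrictMono fun x : ℝ => fderiv ℝ (tiltedCgf P lam) (τ + x • v) v := by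
  obtain ⟨n, hn, m, hm, hnm⟩ := hrank.exists_sum_mul_ne hv
  simp only [fderiv_tiltedCgf_line hP hP0]
  refine (strictMono_expMoment_div (fun k hk => ?_) hn hm hnm).add_const _
  exact mul_pos ((hP k).lt_of_ne (MvPolynomial.mem_support_iff.1 hk).symm) (Real.exp_pos _)

theorem eq_of_fderiv_tiltedCgf_eq_zero (hP : ∀ n, 0 ≤ P.coeff n) (hP0 : P ≠ 0)
    (hrank : FullRank P) (lam : Fin d → ℝ) {τ₁ τ₂ : Fin d → ℝ}
    (h₁ : fderiv ℝ (tiltedCgf P lam) τ₁ = 0) (h₂ : fderiv ℝ (tiltedCgf P lam) τ₂ = 0) :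
    τ₁ = τ₂ := by
  by_contra hne
  have hmono := strictMono_fderiv_tiltedCgf_line hP hP0 hrank lam τ₁ (sub_ne_zero.2 (Ne.symm hne))
    zero_lt_one
  simp only [zero_smul, add_zero, one_smul, add_sub_cancel, h₁, h₂] at hmono
  exact lt_irrefl _ hmono

theorem exists_le_tiltedCgf (hpos : ∀ n : Fin d →₀ ℕ, (∀ j, n j ≤ 1) → 0 < P.coeff n)
    (hP : ∀ n, 0 ≤ P.coeff n) (lam : Fin d → ℝ) :
    ∃ m, ∀ t, m + ∑ j, min (lam j) (1 - lam j) * |t j| ≤ tiltedCgf P lam t := by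
  let vertex : (Fin d → Bool) → Fin d →₀ ℕ := fun u =>
    Finsupp.equivFunOnFinite.symm fun j => (u j).toNat
  have hvertex : ∀ u, 0 < P.coeff (vertex u) := fun u =>
    hpos _ fun j => by simp [vertex, Bool.toNat_le]
  obtain ⟨m, hm⟩ := (Set.finite_range fun u => Real.log (P.coeff (vertex u))).bddBelow
  refine ⟨m, fun t => ?_⟩
  -- compare with the monomial `∏_{t j ≥ 0} x j`
  let u : Fin d → Bool := fun j => decide (0 ≤ t j)
  have hcoord : ∀ j, min (lam j) (1 - lam j) * |t j| ≤ (vertex u j : ℝ) * t j - lam j * t j := by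
    intro j
    by_cases h : 0 ≤ t j
    · simp only [vertex, u, h, Finsupp.coe_equivFunOnFinite_symm, decide_true,
        Bool.toNat_true, Nat.cast_one, abs_of_nonneg h]
      nlinarith [min_le_right (lam j) (1 - lam j)]
    · push Not at h
      simp only [vertex, u, h.not_ge, Finsupp.coe_equivFunOnFinite_symm, decide_false,
        Bool.toNat_false, Nat.cast_zero, abs_of_neg h]
      nlinarith [min_le_left (lam j) (1 - lam j)]
  calc m + ∑ j, min (lam j) (1 - lam j) * |t j|
      ≤ Real.log (P.coeff (vertex u)) + ∑ j, ((vertex u j : ℝ) * t j - lam j * t j) :=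
        add_le_add (hm ⟨u, rfl⟩) (sum_le_sum fun j _ => hcoord j)
    _ ≤ tiltedCgf P lam t := by
        rw [sum_sub_distrib, tiltedCgf, ← add_sub_assoc]
        exact sub_le_sub_right (log_coeff_add_le_cgf hP (hvertex u) t) _

theorem tendsto_tiltedCgf_cocompact (hpos : ∀ n : Fin d →₀ ℕ, (∀ j, n j ≤ 1) → 0 < P.coeff n)
    (hP : ∀ n, 0 ≤ P.coeff n) {lam : Fin d → ℝ} (hlam : ∀ j, lam j ∈ Set.Ioo (0 : ℝ) 1) :
    Tendsto (tiltedCgf P lam) (cocompact (Fin d → ℝ)) atTop := by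
  obtain ⟨m, hm⟩ := exists_le_tiltedCgf hpos hP lam
  rw [← coprodᵢ_cocompact, Filter.coprodᵢ, tendsto_iSup]
  intro j
  have hε : 0 < min (lam j) (1 - lam j) := lt_min (hlam j).1 (sub_pos.2 (hlam j).2)
  have habs : Tendsto (fun t : Fin d → ℝ => |t j|) (comap (Function.eval j) (cocompact ℝ)) atTop :=
    tendsto_norm_cocompact_atTop.comp tendsto_comap
  refine tendsto_atTop_mono (fun t => le_trans ?_ (hm t))
    (tendsto_atTop_add_const_left _ m (habs.const_mul_atTop hε))
  gcongr
  exact single_le_sum (f := fun i => min (lam i) (1 - lam i) * |t i|)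
    (fun i _ => mul_nonneg (le_min (hlam i).1.le (sub_pos.2 (hlam i).2).le) (abs_nonneg _))
    (mem_univ j)

theorem exists_fderiv_tiltedCgf_eq_zero (hpos : ∀ n : Fin d →₀ ℕ, (∀ j, n j ≤ 1) → 0 < P.coeff n)
    (hP : ∀ n, 0 ≤ P.coeff n) {lam : Fin d → ℝ} (hlam : ∀ j, lam j ∈ Set.Ioo (0 : ℝ) 1) :
    ∃ τ, fderiv ℝ (tiltedCgf P lam) τ = 0 := by
  have hP0 : P ≠ 0 := MvPolynomial.ne_zero_iff.2 ⟨0, (hpos 0 fun _ => zero_le_one).ne'⟩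
  obtain ⟨τ, hτ⟩ := (differentiable_tiltedCgf hP hP0 lam).continuous.exists_forall_le
    (tendsto_tiltedCgf_cocompact hpos hP hlam)
  exact ⟨τ, IsLocalMin.fderiv_eq_zero (Eventually.of_forall hτ)⟩

end PaperStmt

/-- properties of a polynomial whose monomials are exactly the
square-free monomials `∏_{j∈X} x_j`, each with a strictly positive coefficient. -/
theorem squarefree_positive_polynomial_properties {d : ℕ}
    (P : MvPolynomial (Fin d) ℝ)
    (hpos : ∀ n : Fin d →₀ ℕ, (∀ j, n j ≤ 1) → 0 < P.coeff n)
    (hzero : ∀ n : Fin d →₀ ℕ, ¬ (∀ j, n j ≤ 1) → P.coeff n = 0)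
    (K : (Fin d → ℝ) → ℝ)
    (hK : K = fun t => Real.log (MvPolynomial.eval (fun j => Real.exp (t j)) P)) :
    -- (i) full rank
    FullRank P ∧
    -- (ii) aperiodicity
    Aperiodic P ∧
    -- (iii) for every `λ ∈ (0,1)^d`, `K(t) - λᵀ t → +∞` as `t` tends to any
    -- boundary point of `[-∞,+∞]^d`
    (∀ lam : Fin d → ℝ, (∀ j, lam j ∈ Set.Ioo (0 : ℝ) 1) →
      ∀ ℓ : Fin d → EReal, (∃ j, ℓ j = ⊤ ∨ ℓ j = ⊥) →
        Filter.Tendsto (fun t : Fin d → ℝ => K t - ∑ j, lam j * t j)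
          (Filter.comap (fun t : Fin d → ℝ => fun j => ((t j : ℝ) : EReal)) (nhds ℓ))
          Filter.atTop) ∧
    -- (iv) there is a unique point where the gradient of `K(t) - λᵀ t` vanishes
    (∀ lam : Fin d → ℝ, (∀ j, lam j ∈ Set.Ioo (0 : ℝ) 1) →
      ∃! τ : Fin d → ℝ,
        ∀ j, fderiv ℝ (fun t => K t - ∑ i, lam i * t i) τ (Pi.single j 1) = 0) := by
  obtain rfl : K = cgf P := hK
  have hP : ∀ n, 0 ≤ P.coeff n := fun n => by
    by_cases h : ∀ j, n j ≤ 1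
    exacts [(hpos n h).le, (hzero n h).ge]
  have h0 : P.coeff 0 ≠ 0 := (hpos 0 fun _ => zero_le_one).ne'
  have h1 : ∀ j, P.coeff (Finsupp.single j 1) ≠ 0 := fun j =>
    (hpos _ fun i => by rw [Finsupp.single_apply]; split_ifs <;> omega).ne'
  have hrank := fullRank_of_coeff_ne_zero h0 h1
  refine ⟨hrank, aperiodic_of_coeff_ne_zero h0 h1, fun lam hlam ℓ hℓ =>
    (tendsto_tiltedCgf_cocompact hpos hP hlam).mono_left (comap_coe_nhds_le_cocompact hℓ),
    fun lam hlam => ?_⟩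
  obtain ⟨τ, hτ⟩ := exists_fderiv_tiltedCgf_eq_zero hpos hP hlam
  refine ⟨τ, fun j => ?_, fun τ' hτ' => ?_⟩
  · exact DFunLike.congr_fun hτ (Pi.single j 1)
  · exact eq_of_fderiv_tiltedCgf_eq_zero hP (MvPolynomial.ne_zero_iff.2 ⟨0, h0⟩) hrank lam
      (ContinuousLinearMap.eq_zero_of_apply_single hτ') hτ
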